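/- Suppose there is a constant w̄ ≥ 0 such that Σ_{k=0}^{T−1} ‖w_k‖² ≤ T w̄² for all T ∈ ℕ. Then for every T ∈ ℕ the projected LMS one-step prediction errors satisfy Σ_{k=0}^{T−1} ‖D_k(θ* − θ̂_k)‖ ≤ T w̄ + √(T/μ) · ‖θ̂_0 − θ*‖. -/

import Mathlib

open Matrix Finset

/-- Euclidean norm of a vector in `ℝ^n`. -/
noncomputable def vnorm {n : ℕ} (v : Fin n → ℝ) : ℝ := Real.sqrt (∑ i, v i ^ 2)

/-- Spectral norm (ℓ²-operator norm) of a matrix. -/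
noncomputable def specNorm {n d : ℕ} (D : Matrix (Fin n) (Fin d) ℝ) : ℝ :=
  ‖LinearMap.toContinuousLinearMap (Matrix.toEuclideanLin D)‖

/-! The squared distance `‖θ̂ₖ - θ*‖²` is a Lyapunov function. Since `μ‖Dₖ‖² ≤ 1`, the gradient
step lowers it by at least `μ (‖Dₖ(θ* - θ̂ₖ)‖² - ‖wₖ‖²)`, and projecting onto the convex set
`Θ ∋ θ*` cannot raise it. Telescoping gives `∑ ‖Dₖ(θ* - θ̂ₖ)‖² ≤ T w̄² + ‖θ̂₀ - θ*‖² / μ`, and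
Cauchy–Schwarz turns this into the bound on `∑ ‖Dₖ(θ* - θ̂ₖ)‖`. -/

open RealInnerProductSpace ContinuousLinearMap
open scoped InnerProduct

theorem add_sum_range_le_of_forall_add_le {α : Type*} [AddCommMonoid α] [PartialOrder α]
    [IsOrderedCancelAddMonoid α] {V f g : ℕ → α} (h : ∀ k, V (k + 1) + f k ≤ V k + g k) (T : ℕ) :
    V T + ∑ k ∈ range T, f k ≤ V 0 + ∑ k ∈ range T, g k := by
  induction T with
  | zero => simp
  | succ T ih =>
    rw [sum_range_succ, sum_range_succ]
    refine le_of_add_le_add_left (a := V T) ?_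
    calc V T + (V (T + 1) + (∑ k ∈ range T, f k + f T))
        = (V (T + 1) + f T) + (V T + ∑ k ∈ range T, f k) := by abel
      _ ≤ (V T + g T) + (V 0 + ∑ k ∈ range T, g k) := add_le_add (h T) ih
      _ = V T + (V 0 + (∑ k ∈ range T, g k + g T)) := by abel

theorem sum_le_card_mul_add_sqrt_mul_of_sum_sq_le {ι : Type*} {S : Finset ι} {a : ι → ℝ}
    {c s r : ℝ} (ha : ∀ i ∈ S, 0 ≤ a i) (hc : 0 ≤ c) (hs : 0 ≤ s) (hr : 0 ≤ r)
    (h : ∑ i ∈ S, a i ^ 2 ≤ #S * c ^ 2 + s * r ^ 2) :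
    ∑ i ∈ S, a i ≤ #S * c + √(#S * s) * r := by
  have hsq : (∑ i ∈ S, a i) ^ 2 ≤ (#S * c + √(#S * s) * r) ^ 2 :=
    calc (∑ i ∈ S, a i) ^ 2 ≤ #S * ∑ i ∈ S, a i ^ 2 := sq_sum_le_card_mul_sum_sq
      _ ≤ #S * (#S * c ^ 2 + s * r ^ 2) := by gcongr
      _ = (#S * c) ^ 2 + (√(#S * s) * r) ^ 2 := by
        rw [mul_pow, mul_pow, Real.sq_sqrt (by positivity)]; ring
      _ ≤ (#S * c + √(#S * s) * r) ^ 2 := by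
        have : 0 ≤ (#S * c) * (√(#S * s) * r) := by positivity
        nlinarith
  exact (pow_le_pow_iff_left₀ (sum_nonneg ha) (by positivity) two_ne_zero).1 hsq

section Projection

variable {E : Type*} [NormedAddCommGroup E] [InnerProductSpace ℝ E]

theorem Convex.norm_sub_le_of_forall_norm_sub_le {K : Set E} (hK : Convex ℝ K) {x p t : E}
    (hp : p ∈ K) (ht : t ∈ K) (hmin : ∀ y ∈ K, ‖p - x‖ ≤ ‖y - x‖) : ‖p - t‖ ≤ ‖x - t‖ := by
  have : Nonempty K := ⟨⟨p, hp⟩⟩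
  have hbdd : BddBelow (Set.range fun y : K => ‖x - y‖) :=
    ⟨0, Set.forall_mem_range.2 fun _ => norm_nonneg _⟩
  have hinf : ‖x - p‖ = ⨅ y : K, ‖x - y‖ :=
    le_antisymm (le_ciInf fun y => by simpa only [norm_sub_rev x] using hmin y y.2)
      (ciInf_le hbdd ⟨p, hp⟩)
  have hobtuse : ⟪x - p, t - p⟫ ≤ 0 := (norm_eq_iInf_iff_real_inner_le_zero hK hp).1 hinf t ht
  have hsq : ‖x - t‖ ^ 2 = ‖x - p‖ ^ 2 - 2 * ⟪x - p, t - p⟫ + ‖t - p‖ ^ 2 := by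
    rw [← norm_sub_sq_real, sub_sub_sub_cancel_right]
  rw [norm_sub_rev p t, ← pow_le_pow_iff_left₀ (norm_nonneg _) (norm_nonneg _) two_ne_zero]
  nlinarith [norm_nonneg (x - p)]

end Projection

section LMS

variable {E F : Type*} [NormedAddCommGroup E] [InnerProductSpace ℝ E] [CompleteSpace E]
  [NormedAddCommGroup F] [InnerProductSpace ℝ F] [CompleteSpace F]

theorem norm_sub_smul_adjoint_sq_le (A : E →L[ℝ] F) {μ : ℝ} (hμ : 0 ≤ μ)
    (hA : μ * ‖A‖ ^ 2 ≤ 1) (x : E) (w : F) :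
    ‖x - μ • (A†) (A x + w)‖ ^ 2 ≤ ‖x‖ ^ 2 + μ * (‖w‖ ^ 2 - ‖A x‖ ^ 2) := by
  set v := A x + w
  have hadj : ‖(A†) v‖ ^ 2 ≤ ‖A‖ ^ 2 * ‖v‖ ^ 2 := by
    rw [← mul_pow, ← LinearIsometryEquiv.norm_map adjoint A]
    gcongr
    exact le_opNorm _ _
  have hw : ‖w‖ ^ 2 = ‖v‖ ^ 2 - 2 * ⟪v, A x⟫ + ‖A x‖ ^ 2 := by
    rw [← norm_sub_sq_real, add_sub_cancel_left]
  have hdamp : μ ^ 2 * ‖(A†) v‖ ^ 2 ≤ μ * ‖v‖ ^ 2 :=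
    calc μ ^ 2 * ‖(A†) v‖ ^ 2 ≤ μ ^ 2 * (‖A‖ ^ 2 * ‖v‖ ^ 2) := by gcongr
      _ = (μ * ‖A‖ ^ 2) * (μ * ‖v‖ ^ 2) := by ring
      _ ≤ μ * ‖v‖ ^ 2 := mul_le_of_le_one_left (by positivity) hA
  rw [norm_sub_sq_real, inner_smul_right, adjoint_inner_right, norm_smul, mul_pow,
    Real.norm_eq_abs, sq_abs, hw, real_inner_comm]
  linear_combination hdamp

theorem projected_lms_step_energy_le {K : Set E} (hK : Convex ℝ K) {θs : E} (hθs : θs ∈ K)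
    (A : E →L[ℝ] F) {μ : ℝ} (hμ : 0 ≤ μ) (hA : μ * ‖A‖ ^ 2 ≤ 1) (w : F) {θ θt θ' : E}
    (ht : θt = θ + μ • (A†) (A (θs - θ) + w)) (hθ' : θ' ∈ K)
    (hnear : ∀ η ∈ K, ‖θ' - θt‖ ≤ ‖η - θt‖) :
    ‖θ' - θs‖ ^ 2 + μ * ‖A (θs - θ)‖ ^ 2 ≤ ‖θ - θs‖ ^ 2 + μ * ‖w‖ ^ 2 := by
  have hproj : ‖θ' - θs‖ ≤ ‖θt - θs‖ := hK.norm_sub_le_of_forall_norm_sub_le hθ' hθs hnear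
  have hgrad : θt - θs = -((θs - θ) - μ • (A†) (A (θs - θ) + w)) := by rw [ht]; abel
  have hdescent := norm_sub_smul_adjoint_sq_le A hμ hA (θs - θ) w
  rw [hgrad, norm_neg] at hproj
  rw [norm_sub_rev θs θ] at hdescent
  nlinarith [pow_le_pow_left₀ (norm_nonneg _) hproj 2]

end LMS

open WithLp

theorem vnorm_eq_norm_toLp {m : ℕ} (v : Fin m → ℝ) : vnorm v = ‖toLp 2 v‖ := by
  simp [vnorm, EuclideanSpace.norm_eq, sq_abs]

theorem toEuclideanLin_toContinuousLinearMap_adjoint_toLp {m n : ℕ}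
    (D : Matrix (Fin m) (Fin n) ℝ) (v : Fin m → ℝ) :
    ((toEuclideanLin D).toContinuousLinearMap†) (toLp 2 v) = toLp 2 (Dᵀ *ᵥ v) := by
  rw [← LinearMap.adjoint_toContinuousLinearMap, ← toEuclideanLin_conjTranspose_eq_adjoint,
    conjTranspose_eq_transpose_of_trivial]
  rfl

theorem vnorm_projected_lms_step_energy_le {n d : ℕ} {Θ : Set (Fin d → ℝ)} (hΘ : Convex ℝ Θ)
    {θs : Fin d → ℝ} (hθs : θs ∈ Θ) (D : Matrix (Fin n) (Fin d) ℝ) {μ : ℝ} (hμ : 0 ≤ μ)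
    (hD : μ * specNorm D ^ 2 ≤ 1) (w : Fin n → ℝ) {θ θt θ' : Fin d → ℝ}
    (ht : θt = θ + μ • Dᵀ *ᵥ (D *ᵥ (θs - θ) + w)) (hθ' : θ' ∈ Θ)
    (hnear : ∀ η ∈ Θ, vnorm (θ' - θt) ≤ vnorm (η - θt)) :
    vnorm (θ' - θs) ^ 2 + μ * vnorm (D *ᵥ (θs - θ)) ^ 2 ≤
      vnorm (θ - θs) ^ 2 + μ * vnorm w ^ 2 := by
  have hK : Convex ℝ (toLp 2 '' Θ) :=
    hΘ.linear_image (WithLp.linearEquiv 2 ℝ (Fin d → ℝ)).symm.toLinearMap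
  let A := (toEuclideanLin D).toContinuousLinearMap
  have hA : ∀ x, A (toLp 2 x) = toLp 2 (D *ᵥ x) := fun _ => rfl
  have key := projected_lms_step_energy_le hK ⟨θs, hθs, rfl⟩ A hμ hD (toLp 2 w)
    (θ := toLp 2 θ) (θt := toLp 2 θt) (θ' := toLp 2 θ') ?_ ⟨θ', hθ', rfl⟩ ?_
  · simpa only [vnorm_eq_norm_toLp, ← toLp_sub, hA] using key
  · rw [← toLp_sub, hA, ← toLp_add, toEuclideanLin_toContinuousLinearMap_adjoint_toLp,
      ← toLp_smul, ← toLp_add, ht]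
  · rintro _ ⟨η, hη, rfl⟩
    simpa only [vnorm_eq_norm_toLp, toLp_sub] using hnear η hη

theorem lms_prediction_error_transient_bound_general
    {d n : ℕ}
    (Θ : Set (Fin d → ℝ)) (hΘconv : Convex ℝ Θ)
    (θstar : Fin d → ℝ) (hθstar : θstar ∈ Θ)
    (μ : ℝ) (hμ : 0 < μ)
    (D : ℕ → Matrix (Fin n) (Fin d) ℝ) (hD : ∀ k, μ * specNorm (D k) ^ 2 ≤ 1)
    (w : ℕ → (Fin n → ℝ))
    (θhat θtil : ℕ → (Fin d → ℝ))
    (hupd : ∀ k, θtil (k + 1) =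
      θhat k + μ • (D k)ᵀ.mulVec ((D k).mulVec (θstar - θhat k) + w k))
    (hproj_mem : ∀ k, θhat (k + 1) ∈ Θ)
    (hproj : ∀ k, ∀ θ ∈ Θ, vnorm (θhat (k + 1) - θtil (k + 1)) ≤ vnorm (θ - θtil (k + 1)))
    (wbar : ℝ) (hwbar : 0 ≤ wbar)
    (hw : ∀ T : ℕ, ∑ k ∈ Finset.range T, vnorm (w k) ^ 2 ≤ T * wbar ^ 2) :
    ∀ T : ℕ,
      ∑ k ∈ Finset.range T, vnorm ((D k).mulVec (θstar - θhat k)) ≤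
        T * wbar + Real.sqrt ((T : ℝ) / μ) * vnorm (θhat 0 - θstar) := by
  intro T
  have henergy := add_sum_range_le_of_forall_add_le (V := fun k => vnorm (θhat k - θstar) ^ 2)
    (fun k => vnorm_projected_lms_step_energy_le hΘconv hθstar (D k) hμ.le (hD k) (w k) (hupd k)
      (hproj_mem k) (hproj k)) T
  simp only [← mul_sum] at henergy
  have hsq : ∑ k ∈ range T, vnorm ((D k).mulVec (θstar - θhat k)) ^ 2 ≤
      #(range T) * wbar ^ 2 + μ⁻¹ * vnorm (θhat 0 - θstar) ^ 2 := by
    refine le_of_mul_le_mul_left ?_ hμ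
    rw [card_range, mul_add, mul_inv_cancel_left₀ hμ.ne']
    nlinarith [mul_le_mul_of_nonneg_left (hw T) hμ.le, sq_nonneg (vnorm (θhat T - θstar))]
  have hbound := sum_le_card_mul_add_sqrt_mul_of_sum_sq_le (fun k _ => Real.sqrt_nonneg _) hwbar
    (inv_nonneg.2 hμ.le) (Real.sqrt_nonneg _) hsq
  rwa [card_range, ← div_eq_mul_inv] at hbound

/-- transient bound on the cumulated LMS prediction error
under point-wise bounded disturbances. -/
theorem lms_prediction_error_transient_bound
    {d n : ℕ} (hd : 1 ≤ d) (hn : 1 ≤ n)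
    (Θ : Set (Fin d → ℝ)) (hΘne : Θ.Nonempty) (hΘcomp : IsCompact Θ) (hΘconv : Convex ℝ Θ)
    (θstar : Fin d → ℝ) (hθstar : θstar ∈ Θ)
    (μ : ℝ) (hμ : 0 < μ)
    (D : ℕ → Matrix (Fin n) (Fin d) ℝ) (hD : ∀ k, μ * specNorm (D k) ^ 2 ≤ 1)
    (w : ℕ → (Fin n → ℝ))
    (θhat θtil : ℕ → (Fin d → ℝ))
    (hθ0 : θhat 0 ∈ Θ)
    (hupd : ∀ k, θtil (k + 1) =
      θhat k + μ • (D k)ᵀ.mulVec ((D k).mulVec (θstar - θhat k) + w k))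
    (hproj_mem : ∀ k, θhat (k + 1) ∈ Θ)
    (hproj : ∀ k, ∀ θ ∈ Θ, vnorm (θhat (k + 1) - θtil (k + 1)) ≤ vnorm (θ - θtil (k + 1)))
    (wbar : ℝ) (hwbar : 0 ≤ wbar)
    (hw : ∀ T : ℕ, ∑ k ∈ Finset.range T, vnorm (w k) ^ 2 ≤ T * wbar ^ 2) :
    ∀ T : ℕ,
      ∑ k ∈ Finset.range T, vnorm ((D k).mulVec (θstar - θhat k)) ≤
        T * wbar + Real.sqrt ((T : ℝ) / μ) * vnorm (θhat 0 - θstar) :=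
  lms_prediction_error_transient_bound_general Θ hΘconv θstar hθstar μ hμ D hD w θhat θtil hupd
    hproj_mem hproj wbar hwbar hw
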